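/- Let A and B be symmetric densely defined operators on a Hilbert space with the same dense domain D, and suppose there exist q ∈ (0,1) and M ≥ 0 such that ‖(B-A)u‖ ≤ q‖Au‖ + M‖u‖ and ‖(B-A)u‖ ≤ q‖Bu‖ + M‖u‖ for all u ∈ D. Then A is essentially self-adjoint if and only if B is essentially self-adjoint. -/

import Mathlib

/-!
For a symmetric `T` let `T_t (x, y) = (T x - t y, T y + t x)`, the real form of `T + i t` on
`E × E`. Symmetry gives `‖T_t w‖² = ‖T w₁‖² + ‖T w₂‖² + t² ‖w‖²`, so for `t ≠ 0` the map `T_t`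
is injective, with closed range when `T` is closed, and a vector orthogonal to its range is, up
to swapping components, a kernel vector of `(T†)_t`. Hence a closed densely defined symmetric
`T` is self-adjoint iff `T_t` is onto. If `Ā` is self-adjoint, the relative bound passes to the
closures, so `dom Ā ⊆ dom B̄` and `‖(B̄ - Ā) w‖ ≤ (q + M / t) ‖Ā_t w‖`. For `t > M / (1 - q)`
this makes `B̄_t = Ā_t + (B̄ - Ā)` a small perturbation of the bijection `Ā_t`, onto by a
Neumann series, so `B̄` is self-adjoint; the second inequality gives the converse.
-/

open scoped InnerProductSpace NNReal

open Filter Topology LinearPMap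

@[ext]
lemma WithLp.prod_ext {p : ENNReal} {α β : Type*} {x y : WithLp p (α × β)} (h₁ : x.fst = y.fst)
    (h₂ : x.snd = y.snd) : x = y :=
  WithLp.ofLp_injective p (Prod.ext h₁ h₂)

lemma cauchySeq_of_dist_le {ι α β γ : Type*} [Nonempty ι] [SemilatticeSup ι]
    [PseudoMetricSpace α] [PseudoMetricSpace β] [PseudoMetricSpace γ] {f : ι → α} {g : ι → β}
    {h : ι → γ} {C C' : ℝ} (hg : CauchySeq g) (hh : CauchySeq h)
    (hf : ∀ n m, dist (f n) (f m) ≤ C * dist (g n) (g m) + C' * dist (h n) (h m)) :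
    CauchySeq f := by
  rw [cauchySeq_iff_tendsto_dist_atTop_0] at hg hh ⊢
  exact squeeze_zero (fun _ => dist_nonneg) (fun p => hf p.1 p.2)
    (by simpa using (hg.const_mul C).add (hh.const_mul C'))

lemma sq_mul_add_mul_le {q μ a s : ℝ} (hq : 0 ≤ q) (hμ : 0 ≤ μ) :
    (q * a + μ * s) ^ 2 ≤ (q + μ) ^ 2 * (a ^ 2 + s ^ 2) := by
  nlinarith [mul_nonneg (mul_nonneg hq hμ) (sq_nonneg (a - s)), mul_nonneg hq hμ,
    sq_nonneg (q * s), sq_nonneg (μ * a)]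

theorem ContinuousLinearMap.isClosed_image_of_norm_le_mul_norm {R F G : Type*}
    [NontriviallyNormedField R] [NormedAddCommGroup F] [NormedSpace R F] [CompleteSpace F]
    [NormedAddCommGroup G] [NormedSpace R G] (L : F →L[R] G) {S : Submodule R F}
    (hS : IsClosed (S : Set F)) (K : ℝ≥0) (hK : ∀ x ∈ S, ‖x‖ ≤ K * ‖L x‖) :
    IsClosed (L '' S) := by
  have : CompleteSpace S := hS.completeSpace_coe
  have hanti := (L ∘L S.subtypeL).antilipschitz_of_bound fun x => hK x x.2
  convert hanti.isClosed_range (L ∘L S.subtypeL).uniformContinuous using 1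
  ext
  simp

theorem LinearMap.surjective_add_of_norm_le {R V F : Type*} [NontriviallyNormedField R]
    [AddCommGroup V] [Module R V] [NormedAddCommGroup F] [NormedSpace R F] [CompleteSpace F]
    {P C : V →ₗ[R] F} (hP : Function.Bijective P) {c : ℝ} (hc : c < 1)
    (hC : ∀ v, ‖C v‖ ≤ c * ‖P v‖) : Function.Surjective (P + C) := by
  let Φ := LinearEquiv.ofBijective P hP
  have hΦ : ∀ h, P (Φ.symm h) = h := Φ.apply_symm_apply
  let K := (C ∘ₗ Φ.symm.toLinearMap).mkContinuous c fun h => by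
    simpa only [LinearMap.comp_apply, LinearEquiv.coe_coe, hΦ] using hC (Φ.symm h)
  have hK : ‖-K‖ < 1 := (norm_neg K).trans_lt
    ((LinearMap.mkContinuous_norm_le' _ _).trans_lt (max_lt hc one_pos))
  have hsurj : Function.Surjective (1 + K : F →L[R] F) := by
    have h := (ContinuousLinearMap.isUnit_iff_bijective.1 (Units.oneSub (-K) hK).isUnit).2
    rwa [Units.val_oneSub, sub_neg_eq_add] at h
  intro h
  obtain ⟨y, rfl⟩ := hsurj h
  exact ⟨Φ.symm y, by simp [K, hΦ]⟩

section closure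

variable {R E F : Type*} [NormedField R] [NormedAddCommGroup E] [NormedSpace R E]
  [NormedAddCommGroup F] [NormedSpace R F]

def LinearPMap.HasRelBound (T S : E →ₗ.[R] F) (q M : ℝ) : Prop :=
  ∃ h : T.domain ≤ S.domain, ∀ x : T.domain,
    ‖S (Submodule.inclusion h x) - T x‖ ≤ q * ‖T x‖ + M * ‖(x : E)‖

namespace LinearPMap.IsClosable

variable {T : E →ₗ.[R] F} (hT : T.IsClosable)
include hT

lemma exists_seq_tendsto (x : T.closure.domain) : ∃ d : ℕ → T.domain,
    Tendsto (fun n => ((d n : E), T (d n))) atTop (𝓝 ((x : E), T.closure x)) := by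
  have hx : ((x : E), T.closure x) ∈ _root_.closure (T.graph : Set (E × F)) := by
    rw [← Submodule.topologicalClosure_coe, hT.graph_closure_eq_closure_graph]
    exact T.closure.mem_graph x
  obtain ⟨p, hp, htend⟩ := mem_closure_iff_seq_limit.1 hx
  choose d hd₁ hd₂ using fun n => T.mem_graph_iff.1 (hp n)
  have hdp : (fun n => ((d n : E), T (d n))) = p := funext fun n => Prod.ext (hd₁ n) (hd₂ n)
  exact ⟨d, hdp ▸ htend⟩

lemma mem_graph_closure_of_tendsto {d : ℕ → T.domain} {p : E × F}
    (h : Tendsto (fun n => ((d n : E), T (d n))) atTop (𝓝 p)) : p ∈ T.closure.graph := by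
  rw [← hT.graph_closure_eq_closure_graph, ← SetLike.mem_coe, Submodule.topologicalClosure_coe]
  exact mem_closure_of_tendsto h (Eventually.of_forall fun n => T.mem_graph (d n))

end LinearPMap.IsClosable

theorem LinearPMap.HasRelBound.closure [CompleteSpace F] {T S : E →ₗ.[R] F} {q M : ℝ}
    (h : T.HasRelBound S q M) (hT : T.IsClosable) (hS : S.IsClosable) :
    T.closure.HasRelBound S.closure q M := by
  obtain ⟨hle, hbound⟩ := h
  have hlim : ∀ x : T.closure.domain, ∃ z, ((x : E), z) ∈ S.closure.graph ∧
      ‖z - T.closure x‖ ≤ q * ‖T.closure x‖ + M * ‖(x : E)‖ := by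
    intro x
    obtain ⟨d, hd⟩ := hT.exists_seq_tendsto x
    have hd₁ : Tendsto (fun n => (d n : E)) atTop (𝓝 x) := hd.fst_nhds
    have hd₂ : Tendsto (fun n => T (d n)) atTop (𝓝 (T.closure x)) := hd.snd_nhds
    have hcauchy : CauchySeq fun n => S (Submodule.inclusion hle (d n)) := by
      refine cauchySeq_of_dist_le (C := 1 + q) (C' := M) hd₂.cauchySeq hd₁.cauchySeq
        fun n m => ?_
      have h := hbound (d n - d m)
      rw [LinearMap.map_sub, LinearPMap.map_sub, LinearPMap.map_sub, Submodule.coe_sub] at h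
      rw [dist_eq_norm, dist_eq_norm, dist_eq_norm]
      linarith [norm_le_insert' (S (Submodule.inclusion hle (d n)) -
        S (Submodule.inclusion hle (d m))) (T (d n) - T (d m))]
    obtain ⟨z, hz⟩ := cauchySeq_tendsto_of_complete hcauchy
    refine ⟨z, hS.mem_graph_closure_of_tendsto (d := fun n => Submodule.inclusion hle (d n))
      (hd₁.prodMk_nhds hz), ?_⟩
    exact le_of_tendsto_of_tendsto' (hz.sub hd₂).norm
      ((hd₂.norm.const_mul q).add (hd₁.norm.const_mul M)) fun n => hbound (d n)
  choose z hz hzb using hlim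
  have hdom : T.closure.domain ≤ S.closure.domain := fun x hx => by
    obtain ⟨y, hy, -⟩ := S.closure.mem_graph_iff.1 (hz ⟨x, hx⟩)
    have hyx : (y : E) = x := hy
    exact hyx ▸ y.2
  refine ⟨hdom, fun x => ?_⟩
  obtain ⟨y, hy, hyz⟩ := S.closure.mem_graph_iff.1 (hz x)
  rw [show Submodule.inclusion hdom x = y from Subtype.ext hy.symm, hyz]
  exact hzb x

end closure

section

variable {𝕜 E : Type*} [RCLike 𝕜] [NormedAddCommGroup E] [InnerProductSpace 𝕜 E]

section formalAdjoint

variable {F : Type*} [NormedAddCommGroup F] [InnerProductSpace 𝕜 F] {T : E →ₗ.[𝕜] F}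
  {S : F →ₗ.[𝕜] E}

theorem LinearPMap.IsFormalAdjoint.isClosable [CompleteSpace F] (h : T.IsFormalAdjoint S)
    (hS : Dense (S.domain : Set F)) : T.IsClosable :=
  (adjoint_isClosed hS).isClosable.leIsClosable (h.symm.le_adjoint hS)

theorem LinearPMap.IsFormalAdjoint.closure (h : T.IsFormalAdjoint S) (hT : T.IsClosable)
    (hS : S.IsClosable) : T.closure.IsFormalAdjoint S.closure := by
  let Z : Set ((E × F) × (F × E)) := {p | ⟪p.1.2, p.2.1⟫_𝕜 = ⟪p.1.1, p.2.2⟫_𝕜}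
  have hZ : _root_.IsClosed Z := isClosed_eq (by fun_prop) (by fun_prop)
  have hsub : (T.graph : Set (E × F)) ×ˢ (S.graph : Set (F × E)) ⊆ Z := by
    rintro ⟨⟨x, a⟩, ⟨y, b⟩⟩ ⟨hx, hy⟩
    obtain ⟨x', rfl, rfl⟩ := T.mem_graph_iff.1 hx
    obtain ⟨y', rfl, rfl⟩ := S.mem_graph_iff.1 hy
    exact h x' y'
  have hclosure := closure_minimal hsub hZ
  rw [closure_prod_eq, ← Submodule.topologicalClosure_coe, ← Submodule.topologicalClosure_coe,
    hT.graph_closure_eq_closure_graph, hS.graph_closure_eq_closure_graph] at hclosure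
  exact fun x y => hclosure (Set.mk_mem_prod (T.closure.mem_graph x) (S.closure.mem_graph y))

end formalAdjoint

section complexShift

variable {V : Submodule 𝕜 E}

/-- The real form of `f + i t` on the complexification `V × V`, the pair `(x, y)` standing for
`x + i y`; it makes sense also when `𝕜 = ℝ`. -/
noncomputable def complexShift (f : V →ₗ[𝕜] E) (t : ℝ) : V × V →ₗ[𝕜] WithLp 2 (E × E) :=
  (WithLp.linearEquiv 2 𝕜 (E × E)).symm.toLinearMap ∘ₗ
    ((f ∘ₗ LinearMap.fst 𝕜 V V - (t : 𝕜) • (V.subtype ∘ₗ LinearMap.snd 𝕜 V V)).prod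
      (f ∘ₗ LinearMap.snd 𝕜 V V + (t : 𝕜) • (V.subtype ∘ₗ LinearMap.fst 𝕜 V V)))

variable (f : V →ₗ[𝕜] E) (t : ℝ)

@[simp] lemma complexShift_fst (w : V × V) :
    (complexShift f t w).fst = f w.1 - (t : 𝕜) • (w.2 : E) := rfl

@[simp] lemma complexShift_snd (w : V × V) :
    (complexShift f t w).snd = f w.2 + (t : 𝕜) • (w.1 : E) := rfl

variable {f}

lemma norm_complexShift_sq (hf : ∀ x y : V, ⟪f x, y⟫_𝕜 = ⟪(x : E), f y⟫_𝕜) (w : V × V) :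
    ‖complexShift f t w‖ ^ 2
      = ‖f w.1‖ ^ 2 + ‖f w.2‖ ^ 2 + t ^ 2 * (‖(w.1 : E)‖ ^ 2 + ‖(w.2 : E)‖ ^ 2) := by
  have hcross : RCLike.re ⟪f w.2, (w.1 : E)⟫_𝕜 = RCLike.re ⟪f w.1, (w.2 : E)⟫_𝕜 := by
    rw [hf, inner_re_symm]
  rw [WithLp.prod_norm_sq_eq_of_L2, complexShift_fst, complexShift_snd, norm_sub_sq (𝕜 := 𝕜),
    norm_add_sq (𝕜 := 𝕜), inner_smul_right, inner_smul_right, RCLike.re_ofReal_mul,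
    RCLike.re_ofReal_mul, hcross, norm_smul, norm_smul, RCLike.norm_ofReal]
  simp only [mul_pow, sq_abs]
  ring

lemma norm_apply_le_norm_complexShift (hf : ∀ x y : V, ⟪f x, y⟫_𝕜 = ⟪(x : E), f y⟫_𝕜)
    (w : V × V) : ‖f w.1‖ ≤ ‖complexShift f t w‖ ∧ ‖f w.2‖ ≤ ‖complexShift f t w‖ := by
  have h := norm_complexShift_sq t hf w
  have h₀ : 0 ≤ t ^ 2 * (‖(w.1 : E)‖ ^ 2 + ‖(w.2 : E)‖ ^ 2) := by positivity
  constructor <;> refine (sq_le_sq₀ (norm_nonneg _) (norm_nonneg _)).1 ?_ <;>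
    linarith [sq_nonneg ‖f w.1‖, sq_nonneg ‖f w.2‖]

lemma abs_mul_norm_le_norm_complexShift (hf : ∀ x y : V, ⟪f x, y⟫_𝕜 = ⟪(x : E), f y⟫_𝕜)
    (w : V × V) :
    |t| * ‖(w.1 : E)‖ ≤ ‖complexShift f t w‖ ∧ |t| * ‖(w.2 : E)‖ ≤ ‖complexShift f t w‖ := by
  have h := norm_complexShift_sq t hf w
  rw [mul_add] at h
  have h₁ : 0 ≤ t ^ 2 * ‖(w.1 : E)‖ ^ 2 := by positivity
  have h₂ : 0 ≤ t ^ 2 * ‖(w.2 : E)‖ ^ 2 := by positivity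
  constructor <;> refine (sq_le_sq₀ (by positivity) (norm_nonneg _)).1 ?_ <;>
    rw [mul_pow, sq_abs] <;> linarith [sq_nonneg ‖f w.1‖, sq_nonneg ‖f w.2‖]

lemma complexShift_injective (hf : ∀ x y : V, ⟪f x, y⟫_𝕜 = ⟪(x : E), f y⟫_𝕜) {t : ℝ}
    (ht : t ≠ 0) : Function.Injective (complexShift f t) := by
  refine (injective_iff_map_eq_zero _).2 fun w hw => ?_
  have hpos : 0 < |t| := abs_pos.2 ht
  obtain ⟨h₁, h₂⟩ := abs_mul_norm_le_norm_complexShift t hf w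
  rw [hw, norm_zero] at h₁ h₂
  ext <;> simp only [Prod.fst_zero, Prod.snd_zero, Submodule.coe_zero, ← norm_le_zero_iff] <;>
    nlinarith [norm_nonneg (w.1 : E), norm_nonneg (w.2 : E)]

lemma inner_complexShift (z : WithLp 2 (E × E)) (w : V × V) :
    ⟪z, complexShift f t w⟫_𝕜 = (⟪z.fst, f w.1⟫_𝕜 + ⟪(t : 𝕜) • z.snd, (w.1 : E)⟫_𝕜)
      + (⟪z.snd, f w.2⟫_𝕜 - ⟪(t : 𝕜) • z.fst, (w.2 : E)⟫_𝕜) := by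
  rw [WithLp.prod_inner_apply]
  change ⟪z.fst, (complexShift f t w).fst⟫_𝕜 + ⟪z.snd, (complexShift f t w).snd⟫_𝕜 = _
  simp only [complexShift_fst, complexShift_snd, inner_sub_right, inner_add_right,
    inner_smul_right, inner_smul_left, RCLike.conj_ofReal]
  ring

lemma mem_orthogonal_range_complexShift_iff (z : WithLp 2 (E × E)) :
    z ∈ (LinearMap.range (complexShift f t))ᗮ ↔ ∀ x : V,
      ⟪z.fst, f x⟫_𝕜 = ⟪-((t : 𝕜) • z.snd), (x : E)⟫_𝕜 ∧
        ⟪z.snd, f x⟫_𝕜 = ⟪(t : 𝕜) • z.fst, (x : E)⟫_𝕜 := by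
  have hrange : z ∈ (LinearMap.range (complexShift f t))ᗮ ↔
      ∀ w, ⟪z, complexShift f t w⟫_𝕜 = 0 := by
    simp only [Submodule.mem_orthogonal', LinearMap.mem_range, forall_exists_index]
    exact ⟨fun h w => h _ w rfl, fun h _ w hw => hw ▸ h w⟩
  simp only [hrange, inner_complexShift, inner_neg_left, Prod.forall]
  refine ⟨fun h x => ⟨?_, ?_⟩, fun h x y => ?_⟩
  · simpa [add_eq_zero_iff_eq_neg] using h x 0
  · simpa [sub_eq_zero] using h 0 x
  · rw [(h x).1, (h y).2]
    ring

end complexShift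

variable (𝕜 E) in
/-- `((x, a), (y, b)) ↦ (a - t y, b + t x)`, i.e. `complexShift` read off a pair of graph points. -/
noncomputable def graphComplexShift (t : ℝ) : (E × E) × (E × E) →L[𝕜] WithLp 2 (E × E) :=
  (WithLp.prodContinuousLinearEquiv 2 𝕜 E E).symm.toContinuousLinearMap ∘L
    ((ContinuousLinearMap.snd 𝕜 E E ∘L ContinuousLinearMap.fst 𝕜 _ _ -
        (t : 𝕜) • (ContinuousLinearMap.fst 𝕜 E E ∘L ContinuousLinearMap.snd 𝕜 _ _)).prod
      (ContinuousLinearMap.snd 𝕜 E E ∘L ContinuousLinearMap.snd 𝕜 _ _ +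
        (t : 𝕜) • (ContinuousLinearMap.fst 𝕜 E E ∘L ContinuousLinearMap.fst 𝕜 _ _)))

lemma LinearPMap.range_complexShift_eq_image (T : E →ₗ.[𝕜] E) (t : ℝ) :
    (LinearMap.range (complexShift T.toFun t) : Set (WithLp 2 (E × E))) =
      graphComplexShift 𝕜 E t '' (T.graph.prod T.graph) := by
  ext h
  constructor
  · rintro ⟨w, rfl⟩
    exact ⟨((w.1, T w.1), (w.2, T w.2)), ⟨T.mem_graph w.1, T.mem_graph w.2⟩, rfl⟩
  · rintro ⟨⟨⟨x, a⟩, ⟨y, b⟩⟩, ⟨hx, hy⟩, rfl⟩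
    obtain ⟨x', rfl, rfl⟩ := T.mem_graph_iff.1 hx
    obtain ⟨y', rfl, rfl⟩ := T.mem_graph_iff.1 hy
    exact ⟨(x', y'), rfl⟩

variable [CompleteSpace E]

theorem LinearPMap.IsClosed.isClosed_range_complexShift {T : E →ₗ.[𝕜] E} (hT : T.IsClosed)
    (hsym : T.IsFormalAdjoint T) {t : ℝ} (ht : t ≠ 0) :
    _root_.IsClosed (LinearMap.range (complexShift T.toFun t) : Set (WithLp 2 (E × E))) := by
  have hpos : 0 < |t| := abs_pos.2 ht
  rw [range_complexShift_eq_image]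
  refine (graphComplexShift 𝕜 E t).isClosed_image_of_norm_le_mul_norm
    (by simpa only [Submodule.prod_coe] using hT.prod hT) (1 + ‖t‖₊⁻¹) ?_
  rintro ⟨⟨x, a⟩, ⟨y, b⟩⟩ ⟨hx, hy⟩
  obtain ⟨x', rfl, rfl⟩ := T.mem_graph_iff.1 hx
  obtain ⟨y', rfl, rfl⟩ := T.mem_graph_iff.1 hy
  change _ ≤ _ * ‖complexShift T.toFun t (x', y')‖
  set N := ‖complexShift T.toFun t (x', y')‖
  obtain ⟨h₁, h₂⟩ := norm_apply_le_norm_complexShift t hsym (x', y')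
  obtain ⟨h₃, h₄⟩ := abs_mul_norm_le_norm_complexShift t hsym (x', y')
  have hN : 0 ≤ N := norm_nonneg _
  have hK₁ : N ≤ (1 + |t|⁻¹) * N := le_mul_of_one_le_left hN (by simp)
  have hK₂ : |t|⁻¹ * N ≤ (1 + |t|⁻¹) * N := by linarith
  simp only [NNReal.coe_add, NNReal.coe_one, NNReal.coe_inv, coe_nnnorm, Real.norm_eq_abs]
  exact norm_prod_le_iff.2 ⟨norm_prod_le_iff.2 ⟨((le_inv_mul_iff₀ hpos).2 h₃).trans hK₂,
    h₁.trans hK₁⟩, norm_prod_le_iff.2 ⟨((le_inv_mul_iff₀ hpos).2 h₄).trans hK₂, h₂.trans hK₁⟩⟩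

lemma IsSelfAdjoint.isFormalAdjoint {T : E →ₗ.[𝕜] E} (hT : IsSelfAdjoint T) :
    T.IsFormalAdjoint T := by
  have h := adjoint_isFormalAdjoint hT.dense_domain
  rwa [isSelfAdjoint_def.1 hT] at h

lemma IsSelfAdjoint.exists_mem_domain_apply_eq {T : E →ₗ.[𝕜] E} (hT : IsSelfAdjoint T) {f g : E}
    (h : ∀ x : T.domain, ⟪f, T x⟫_𝕜 = ⟪g, (x : E)⟫_𝕜) : ∃ hf : f ∈ T.domain, T ⟨f, hf⟩ = g := by
  have hf : f ∈ T†.domain := mem_adjoint_domain_of_exists f ⟨g, fun x => (h x).symm⟩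
  have hadj : ∃ hf : f ∈ T†.domain, T† ⟨f, hf⟩ = g :=
    ⟨hf, adjoint_apply_eq hT.dense_domain ⟨f, hf⟩ fun x => (h x).symm⟩
  rwa [isSelfAdjoint_def.1 hT] at hadj

theorem IsSelfAdjoint.complexShift_surjective {T : E →ₗ.[𝕜] E} (hT : IsSelfAdjoint T) {t : ℝ}
    (ht : t ≠ 0) : Function.Surjective (complexShift T.toFun t) := by
  have horth : (LinearMap.range (complexShift T.toFun t))ᗮ = ⊥ := by
    refine (Submodule.eq_bot_iff _).2 fun z hz => ?_
    have h := (mem_orthogonal_range_complexShift_iff t z).1 hz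
    -- so `(z.snd, z.fst)` lies in the kernel of `T†_t = T_t`
    obtain ⟨h₁, e₁⟩ := hT.exists_mem_domain_apply_eq fun x => (h x).1
    obtain ⟨h₂, e₂⟩ := hT.exists_mem_domain_apply_eq fun x => (h x).2
    have hker : complexShift T.toFun t (⟨z.snd, h₂⟩, ⟨z.fst, h₁⟩) = 0 := by
      ext
      · simp [e₂]
      · simp [e₁]
    have := complexShift_injective hT.isFormalAdjoint ht (hker.trans (_root_.map_zero _).symm)
    ext
    · exact congrArg (fun w => (w.2 : E)) this
    · exact congrArg (fun w => (w.1 : E)) this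
  have hclosed := hT.isClosed.isClosed_range_complexShift hT.isFormalAdjoint ht
  rw [← LinearMap.range_eq_top, ← hclosed.submodule_topologicalClosure_eq]
  exact Submodule.topologicalClosure_eq_top_iff.2 horth

theorem isSelfAdjoint_of_complexShift_surjective {S : E →ₗ.[𝕜] E}
    (hS : Dense (S.domain : Set E)) (hsym : S.IsFormalAdjoint S) {t : ℝ}
    (hsurj : Function.Surjective (complexShift S.toFun t)) : IsSelfAdjoint S := by
  have hle : S ≤ S† := hsym.le_adjoint hS
  suffices hdom : S†.domain ≤ S.domain from
    (eq_of_le_of_domain_eq hle (le_antisymm hle.1 hdom)).symm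
  intro f hf
  -- If `S_t (u, v) = (S† f, t f)`, then `(-v, f - u)` is orthogonal to the range of `S_t`.
  obtain ⟨⟨u, v⟩, huv⟩ := hsurj (WithLp.toLp 2 (S† ⟨f, hf⟩, (t : 𝕜) • f))
  have hu : S u = S† ⟨f, hf⟩ + (t : 𝕜) • (v : E) :=
    eq_add_of_sub_eq (congrArg WithLp.fst huv)
  have hv : S v = (t : 𝕜) • f - (t : 𝕜) • (u : E) :=
    eq_sub_of_add_eq (congrArg WithLp.snd huv)
  have horth : WithLp.toLp 2 (-(v : E), f - u) ∈ (LinearMap.range (complexShift S.toFun t))ᗮ := by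
    refine (mem_orthogonal_range_complexShift_iff t _).2 fun x => ⟨?_, ?_⟩
    · rw [WithLp.toLp_fst, WithLp.toLp_snd, toFun_eq_coe, inner_neg_left, ← hsym v x, hv,
        inner_neg_left, smul_sub]
    · rw [WithLp.toLp_fst, WithLp.toLp_snd, toFun_eq_coe, inner_sub_left,
        ← adjoint_isFormalAdjoint hS ⟨f, hf⟩ x, ← hsym u x, hu, ← inner_sub_left, smul_neg,
        sub_add_cancel_left]
  rw [LinearMap.range_eq_top.2 hsurj, Submodule.top_orthogonal_eq_bot, Submodule.mem_bot] at horth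
  have : f = u := sub_eq_zero.1 (congrArg WithLp.snd horth)
  exact this ▸ u.2

theorem complexShift_surjective_of_norm_sub_le {V : Submodule 𝕜 E} {f g : V →ₗ[𝕜] E}
    (hf : ∀ x y : V, ⟪f x, y⟫_𝕜 = ⟪(x : E), f y⟫_𝕜) {q M t : ℝ} (hq : 0 ≤ q) (hM : 0 ≤ M)
    (ht : 0 < t) (hqM : q + M / t < 1) (hfg : ∀ x, ‖g x - f x‖ ≤ q * ‖f x‖ + M * ‖(x : E)‖)
    (hsurj : Function.Surjective (complexShift f t)) :
    Function.Surjective (complexShift g t) := by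
  have hsplit : complexShift g t = complexShift f t + complexShift (g - f) 0 := by
    refine LinearMap.ext fun w => WithLp.prod_ext ?_ ?_ <;> simp only [complexShift_fst,
      complexShift_snd, LinearMap.add_apply, WithLp.add_fst, WithLp.add_snd, LinearMap.sub_apply,
      RCLike.ofReal_zero, zero_smul, sub_zero, add_zero] <;> abel
  have hμ : 0 ≤ M / t := div_nonneg hM ht.le
  have hcomp : ∀ x : V,
      ‖(g - f) x‖ ^ 2 ≤ (q + M / t) ^ 2 * (‖f x‖ ^ 2 + t ^ 2 * ‖(x : E)‖ ^ 2) := by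
    intro x
    have hMt : M * ‖(x : E)‖ = M / t * (t * ‖(x : E)‖) := by field_simp
    calc ‖(g - f) x‖ ^ 2 ≤ (q * ‖f x‖ + M / t * (t * ‖(x : E)‖)) ^ 2 :=
          pow_le_pow_left₀ (norm_nonneg _) (hMt ▸ hfg x) 2
      _ ≤ _ := by rw [← mul_pow]; exact sq_mul_add_mul_le hq hμ
  rw [hsplit]
  refine LinearMap.surjective_add_of_norm_le ⟨complexShift_injective hf ht.ne', hsurj⟩ hqM
    fun w => (sq_le_sq₀ (norm_nonneg _) (mul_nonneg (add_nonneg hq hμ) (norm_nonneg _))).1 ?_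
  rw [mul_pow, norm_complexShift_sq t hf w, WithLp.prod_norm_sq_eq_of_L2]
  simp only [complexShift_fst, complexShift_snd, RCLike.ofReal_zero, zero_smul, sub_zero, add_zero]
  nlinarith [hcomp w.1, hcomp w.2]

theorem LinearPMap.HasRelBound.complexShift_surjective {T S : E →ₗ.[𝕜] E} {q M t : ℝ}
    (h : T.HasRelBound S q M) (hT : T.IsFormalAdjoint T) (hq : 0 ≤ q) (hM : 0 ≤ M) (ht : 0 < t)
    (hqM : q + M / t < 1) (hsurj : Function.Surjective (complexShift T.toFun t)) :
    Function.Surjective (complexShift S.toFun t) := by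
  obtain ⟨hle, hbound⟩ := h
  intro z
  obtain ⟨w, hw⟩ := complexShift_surjective_of_norm_sub_le (g := S.toFun ∘ₗ Submodule.inclusion hle)
    hT hq hM ht hqM hbound hsurj z
  exact ⟨(Submodule.inclusion hle w.1, Submodule.inclusion hle w.2), hw⟩

theorem LinearPMap.HasRelBound.isSelfAdjoint_closure {T S : E →ₗ.[𝕜] E} {q M : ℝ}
    (h : T.HasRelBound S q M) (hq₀ : 0 ≤ q) (hq₁ : q < 1) (hM : 0 ≤ M)
    (hT : Dense (T.domain : Set E)) (hTsym : T.IsFormalAdjoint T) (hSsym : S.IsFormalAdjoint S)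
    (hsa : IsSelfAdjoint T.closure) : IsSelfAdjoint S.closure := by
  have hS : Dense (S.domain : Set E) := hT.mono h.1
  have hTc := hTsym.isClosable hT
  have hSc := hSsym.isClosable hS
  set t := (M + 1) / (1 - q)
  have ht : 0 < t := div_pos (by linarith) (by linarith)
  have hqM : q + M / t < 1 := by
    have : M / t < 1 - q := by
      rw [div_div_eq_mul_div, div_lt_iff₀ (by linarith)]
      nlinarith
    linarith
  exact isSelfAdjoint_of_complexShift_surjective (hS.mono S.le_closure.1) (hSsym.closure hSc hSc)
    ((h.closure hTc hSc).complexShift_surjective (hTsym.closure hTc hTc) hq₀ hM ht hqM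
      (hsa.complexShift_surjective ht.ne'))

end

/-- Kato–Rellich, symmetric form: if `A` and `B` are symmetric densely defined operators
with the same dense domain `D`, and `‖(B-A)u‖ ≤ q‖Au‖ + M‖u‖` and
`‖(B-A)u‖ ≤ q‖Bu‖ + M‖u‖` for all `u ∈ D` with `q ∈ (0,1)`, `M ≥ 0`, then `A` is
essentially self-adjoint iff `B` is. -/
theorem essentially_selfAdjoint_iff_of_relatively_bounded
    {𝕜 E : Type*} [RCLike 𝕜] [NormedAddCommGroup E] [InnerProductSpace 𝕜 E]
    [CompleteSpace E] (D : Submodule 𝕜 E) (hD : Dense (D : Set E))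
    (A B : D →ₗ[𝕜] E)
    (hAsym : ∀ u v : D, ⟪A u, (v : E)⟫_𝕜 = ⟪(u : E), A v⟫_𝕜)
    (hBsym : ∀ u v : D, ⟪B u, (v : E)⟫_𝕜 = ⟪(u : E), B v⟫_𝕜)
    (q M : ℝ) (hq : q ∈ Set.Ioo (0:ℝ) 1) (hM : 0 ≤ M)
    (h₁ : ∀ u : D, ‖B u - A u‖ ≤ q * ‖A u‖ + M * ‖(u : E)‖)
    (h₂ : ∀ u : D, ‖B u - A u‖ ≤ q * ‖B u‖ + M * ‖(u : E)‖) :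
    IsSelfAdjoint (LinearPMap.closure ⟨D, A⟩) ↔
      IsSelfAdjoint (LinearPMap.closure ⟨D, B⟩) := by
  have hAB : HasRelBound ⟨D, A⟩ ⟨D, B⟩ q M := ⟨le_rfl, h₁⟩
  have hBA : HasRelBound ⟨D, B⟩ ⟨D, A⟩ q M := ⟨le_rfl, fun u => norm_sub_rev (A u) (B u) ▸ h₂ u⟩
  exact ⟨hAB.isSelfAdjoint_closure hq.1.le hq.2 hM hD hAsym hBsym,
    hBA.isSelfAdjoint_closure hq.1.le hq.2 hM hD hBsym hAsym⟩
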